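/- Fix an integer t ≥ 0 and k = 2t+1. For n > k let J = t + I where I ~ BetaBin(n−k, t+1, t+1). Then for every fixed h ∈ (0,1), E[J·lg J] = (1/2)·n·lg n − ((H_{k+1} − H_{t+1})/(2·ln 2))·n ± O(n^{1−h}) as n → ∞ (with the convention 0·lg 0 = 0). -/

import Mathlib

open scoped Classical

/-- The beta function `B(a,b) = ∫_0^1 z^(a-1) (1-z)^(b-1) dz`. -/
noncomputable def betaFun (a b : ℝ) : ℝ := ∫ z in (0:ℝ)..1, z ^ (a - 1) * (1 - z) ^ (b - 1)

/-- The regularized incomplete beta function `I_{x,y}(a,b)`. -/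
noncomputable def regIncBeta (x y a b : ℝ) : ℝ :=
  (∫ z in x..y, z ^ (a - 1) * (1 - z) ^ (b - 1)) / betaFun a b

/-- The probability `P(I = i)` for `I ~ BetaBin(n,a,b)`. -/
noncomputable def betaBinPMF (n : ℕ) (a b : ℝ) (i : ℕ) : ℝ :=
  (n.choose i : ℝ) * betaFun (a + i) (b + ((n - i : ℕ) : ℝ)) / betaFun a b

/-- The `m`-th harmonic number. -/
noncomputable def harm (m : ℕ) : ℝ := ∑ i ∈ Finset.range m, (1 : ℝ) / (i + 1)

/-!
With integer parameters the beta-binomial weights are ratios of binomial coefficients,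
`P(J = x) = C(x,t)·C(n-1-x,t) / C(n,2t+1)`: `J` is the median of a uniformly random
`(2t+1)`-subset of `{0,…,n-1}`. Against these weights `x` and `x·H_x` have exact means, by the
upper Vandermonde identity `∑_y C(y,a)·C(N-y,b) = C(N+1,a+b+1)`, its analogue weighted by
harmonic numbers (`C(n,k)·(H_n - H_k)` also obeys Pascal's rule), and the split
`x·C(x,t) = (t+1)·C(x,t+1) + t·C(x,t)`. Replacing `x·ln x` by `x·(H_x - H_n + ln n)` costs at
most `1` per unit of weight, since `H_m - ln m` decreases and `H_m - ln (m+1)` increases; the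
resulting exact expression differs from the claimed main term by `(ln n)/2 + O(1) = O(n^(1-h))`.
-/

open Finset Real
open scoped Nat

lemma integral_pow_mul_one_sub_pow (p q : ℕ) :
    ∫ z in (0 : ℝ)..1, z ^ p * (1 - z) ^ q = (p ! * q ! : ℝ) / (p + q + 1)! := by
  induction q generalizing p with
  | zero => simp [Nat.factorial_succ, field]
  | succ q ih =>
    have hsplit (z : ℝ) :
        z ^ p * (1 - z) ^ (q + 1) = z ^ p * (1 - z) ^ q - z ^ (p + 1) * (1 - z) ^ q := by ring
    simp_rw [hsplit]
    rw [intervalIntegral.integral_sub (Continuous.intervalIntegrable (by fun_prop) _ _)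
      (Continuous.intervalIntegrable (by fun_prop) _ _), ih, ih,
      show p + 1 + q + 1 = p + q + 1 + 1 by ring, show p + (q + 1) + 1 = p + q + 1 + 1 by ring]
    simp only [Nat.factorial_succ, Nat.cast_mul]
    field_simp
    push_cast
    ring

lemma betaFun_natCast_add_one (p q : ℕ) :
    betaFun (p + 1) (q + 1) = (p ! * q ! : ℝ) / (p + q + 1)! := by
  simp only [betaFun, add_sub_cancel_right, Real.rpow_natCast, integral_pow_mul_one_sub_pow]

lemma betaBinPMF_natCast_add_one (m a b : ℕ) {i : ℕ} (hi : i ≤ m) :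
    betaBinPMF m (a + 1) (b + 1) i
      = ((a + i).choose a * (b + (m - i)).choose b : ℝ)
        / (m + a + b + 1).choose (a + b + 1) := by
  have ha : (a : ℝ) + 1 + i = ((a + i : ℕ) : ℝ) + 1 := by push_cast; ring
  have hb : (b : ℝ) + 1 + ((m - i : ℕ) : ℝ) = ((b + (m - i) : ℕ) : ℝ) + 1 := by
    push_cast; ring
  rw [betaBinPMF, ha, hb, betaFun_natCast_add_one, betaFun_natCast_add_one,
    show a + i + (b + (m - i)) + 1 = m + a + b + 1 by omega, Nat.cast_choose ℝ hi,
    Nat.cast_choose ℝ (Nat.le_add_right a i), Nat.cast_choose ℝ (Nat.le_add_right b (m - i)),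
    Nat.cast_choose ℝ (by omega : a + b + 1 ≤ m + a + b + 1), Nat.add_sub_cancel_left,
    Nat.add_sub_cancel_left, show m + a + b + 1 - (a + b + 1) = m by omega]
  field_simp

lemma sum_betaBinPMF_mul (m a b : ℕ) (f : ℕ → ℝ) :
    ∑ i ∈ range (m + 1), betaBinPMF m (a + 1) (b + 1) i * f (a + i)
      = (∑ x ∈ range (m + a + b + 1), (x.choose a * (m + a + b - x).choose b : ℝ) * f x)
        / (m + a + b + 1).choose (a + b + 1) := by
  set g : ℕ → ℝ := fun x ↦ (x.choose a * (m + a + b - x).choose b : ℝ) * f x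
  have hg : ∀ x ∈ range (m + a + b + 1), x ∉ Ico a (a + (m + 1)) → g x = 0 := by
    intro x hxr hx
    rcases lt_or_ge x a with hxa | hxa
    · simp [g, Nat.choose_eq_zero_of_lt hxa]
    · have : m + a + b - x < b := by
        have := mem_range.1 hxr; have := mem_Ico.not.1 hx; omega
      simp [g, Nat.choose_eq_zero_of_lt this]
  calc ∑ i ∈ range (m + 1), betaBinPMF m (a + 1) (b + 1) i * f (a + i)
      = (∑ i ∈ range (m + 1), g (a + i)) / (m + a + b + 1).choose (a + b + 1) := by
        rw [sum_div]
        refine sum_congr rfl fun i hi ↦ ?_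
        simp only [g]
        rw [betaBinPMF_natCast_add_one m a b (Nat.lt_succ_iff.1 (mem_range.1 hi)),
          show m + a + b - (a + i) = b + (m - i) by have := mem_range.1 hi; omega]
        ring
    _ = (∑ x ∈ range (m + a + b + 1), g x) / (m + a + b + 1).choose (a + b + 1) := by
        rw [← Nat.add_sub_cancel_left (n := a) (m := m + 1), ← sum_Ico_eq_sum_range,
          sum_subset (fun x hx ↦ by simp only [mem_Ico, mem_range] at hx ⊢; omega) hg]

lemma sum_range_choose_mul_choose_mul_eq (a : ℕ) (g : ℕ → ℝ) (G : ℕ → ℕ → ℝ)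
    (hG_zero : ∀ b, G 0 b = ((0 : ℕ).choose a * (0 : ℕ).choose b : ℝ) * g 0)
    (hG_succ_zero : ∀ N, G (N + 1) 0 = G N 0 + (N + 1).choose a * g (N + 1))
    (hG_succ_succ : ∀ N b, G (N + 1) (b + 1) = G N b + G N (b + 1)) (N b : ℕ) :
    ∑ y ∈ range (N + 1), (y.choose a * (N - y).choose b : ℝ) * g y = G N b := by
  induction N generalizing b with
  | zero => simp [hG_zero]
  | succ N ih =>
    cases b with
    | zero => simp [sum_range_succ _ (N + 1), ← ih 0, hG_succ_zero]
    | succ b =>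
      rw [sum_range_succ, hG_succ_succ, ← ih b, ← ih (b + 1), ← sum_add_distrib]
      simp only [Nat.sub_self, Nat.choose_zero_succ, Nat.cast_zero, mul_zero, zero_mul, add_zero]
      refine sum_congr rfl fun y hy ↦ ?_
      rw [show N + 1 - y = N - y + 1 by have := mem_range.1 hy; omega, Nat.choose_succ_succ']
      push_cast
      ring

lemma sum_range_choose_mul_choose (a b N : ℕ) :
    ∑ y ∈ range (N + 1), (y.choose a * (N - y).choose b : ℝ)
      = (N + 1).choose (a + b + 1) := by
  simpa using sum_range_choose_mul_choose_mul_eq a 1 (fun N b ↦ (N + 1).choose (a + b + 1))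
    (fun b ↦ by rcases a with _ | a <;> rcases b with _ | b <;> simp [Nat.choose_eq_zero_iff])
    (fun N ↦ by
      simp only [Pi.one_apply, mul_one, add_zero, Nat.choose_succ_succ (N + 1) a]; push_cast; ring)
    (fun N b ↦ by push_cast [show a + (b + 1) + 1 = a + b + 1 + 1 by ring,
      Nat.choose_succ_succ (N + 1) (a + b + 1)]; ring) N b

lemma harm_zero : harm 0 = 0 := by simp [harm]

lemma harm_succ (m : ℕ) : harm (m + 1) = harm m + 1 / (m + 1) := by
  rw [harm, harm, sum_range_succ]

lemma choose_succ_succ_mul_harm_sub_harm (n k : ℕ) :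
    ((n + 1).choose (k + 1) : ℝ) * (harm (n + 1) - harm (k + 1))
      = n.choose k * (harm n - harm k) + n.choose (k + 1) * (harm n - harm (k + 1)) := by
  have hpascal : ((n + 1).choose (k + 1) : ℝ) = n.choose k + n.choose (k + 1) := by
    exact_mod_cast Nat.choose_succ_succ n k
  have habsorb : ((n + 1) * n.choose k : ℝ) = (n + 1).choose (k + 1) * (k + 1) := by
    exact_mod_cast Nat.add_one_mul_choose_eq n k
  rw [harm_succ n, harm_succ k]
  field_simp
  linear_combination ((harm n - harm k) * ((k : ℝ) + 1) - 1) * ((n : ℝ) + 1) * hpascal - habsorb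

lemma sum_range_choose_mul_choose_mul_harm (a b N : ℕ) :
    ∑ y ∈ range (N + 1), (y.choose a * (N - y).choose b : ℝ) * harm y
      = (N + 1).choose (a + b + 1) * (harm (N + 1) - harm (a + b + 1) + harm a) := by
  refine sum_range_choose_mul_choose_mul_eq a harm
    (fun N b ↦ (N + 1).choose (a + b + 1) * (harm (N + 1) - harm (a + b + 1) + harm a))
    (fun b ↦ ?_) (fun N ↦ ?_) (fun N b ↦ ?_) N b
  · rcases a with _ | a <;> rcases b with _ | b <;> simp [Nat.choose_eq_zero_iff, harm_zero]
  · have hpascal :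
        ((N + 1 + 1).choose (a + 1) : ℝ) = (N + 1).choose a + (N + 1).choose (a + 1) := by
      exact_mod_cast Nat.choose_succ_succ (N + 1) a
    linear_combination choose_succ_succ_mul_harm_sub_harm (N + 1) a + harm a * hpascal
  · have hpascal : ((N + 1 + 1).choose (a + b + 1 + 1) : ℝ)
        = (N + 1).choose (a + b + 1) + (N + 1).choose (a + b + 1 + 1) := by
      exact_mod_cast Nat.choose_succ_succ (N + 1) (a + b + 1)
    simp only [show a + (b + 1) + 1 = a + b + 1 + 1 by ring]
    linear_combination choose_succ_succ_mul_harm_sub_harm (N + 1) (a + b + 1) + harm a * hpascal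

lemma natCast_mul_choose (x a : ℕ) :
    (x * x.choose a : ℝ) = (a + 1) * x.choose (a + 1) + a * x.choose a := by
  rcases lt_or_ge x a with hxa | hax
  · simp [Nat.choose_eq_zero_of_lt hxa, Nat.choose_eq_zero_of_lt (hxa.trans (lt_add_one a))]
  · have h := Nat.choose_succ_right_eq x a
    rw [← Nat.cast_inj (R := ℝ)] at h
    push_cast [hax] at h
    linear_combination -h

lemma sum_range_choose_mul_choose_mul_natCast_mul (a b N : ℕ) (g : ℕ → ℝ) :
    ∑ y ∈ range (N + 1), (y.choose a * (N - y).choose b : ℝ) * (y * g y)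
      = (a + 1) * ∑ y ∈ range (N + 1), (y.choose (a + 1) * (N - y).choose b : ℝ) * g y
        + a * ∑ y ∈ range (N + 1), (y.choose a * (N - y).choose b : ℝ) * g y := by
  simp only [mul_sum, ← sum_add_distrib]
  refine sum_congr rfl fun y _ ↦ ?_
  linear_combination ((N - y).choose b * g y : ℝ) * natCast_mul_choose y a

lemma sum_range_choose_mul_choose_mul_harm_sub_harm_add (m t : ℕ) (c : ℝ) :
    ∑ x ∈ range (m + 2 * t + 1),
        (x.choose t * (m + 2 * t - x).choose t : ℝ) * (x * (harm x - harm (m + 2 * t + 1) + c))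
      = (m + 2 * t + 1).choose (2 * t + 1) * ((m + 2 * t) / 2 * c
          - m / 2 * (harm (2 * t + 2) - harm (t + 1)) - t * (harm (2 * t + 1) - harm t)) := by
  set N := m + 2 * t
  have hsplit : ∀ x ∈ range (N + 1),
      (x.choose t * (N - x).choose t : ℝ) * (x * (harm x - harm (N + 1) + c))
        = (x.choose t * (N - x).choose t : ℝ) * (x * harm x)
          + (c - harm (N + 1)) * ((x.choose t * (N - x).choose t : ℝ) * (x * 1)) :=
    fun x _ ↦ by ring
  have habsorb :
      ((t + 1) * (N + 1).choose (2 * t + 2) : ℝ) = m / 2 * (N + 1).choose (2 * t + 1) := by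
    have h := Nat.choose_succ_right_eq (N + 1) (2 * t + 1)
    rw [show N + 1 - (2 * t + 1) = m by omega, ← Nat.cast_inj (R := ℝ)] at h
    push_cast at h
    linear_combination h / 2
  rw [sum_congr rfl hsplit, sum_add_distrib, ← mul_sum,
    sum_range_choose_mul_choose_mul_natCast_mul, sum_range_choose_mul_choose_mul_natCast_mul,
    sum_range_choose_mul_choose_mul_harm, sum_range_choose_mul_choose_mul_harm]
  simp only [mul_one, sum_range_choose_mul_choose]
  rw [show t + 1 + t + 1 = 2 * t + 2 by ring, show t + t + 1 = 2 * t + 1 by ring]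
  linear_combination (c - harm (2 * t + 2) + harm (t + 1)) * habsorb

lemma harm_eq_harmonic (m : ℕ) : harm m = harmonic m := by
  simp [harm, harmonic]

lemma natCast_mul_log_add_one_sub_log_le_one (x : ℕ) : x * (log (x + 1) - log x) ≤ 1 := by
  rcases Nat.eq_zero_or_pos x with rfl | hx
  · simp
  have hx' : (0 : ℝ) < x := Nat.cast_pos.2 hx
  have h := Real.log_le_sub_one_of_pos (show (0 : ℝ) < (x + 1) / x by positivity)
  rw [Real.log_div (by positivity) hx'.ne'] at h
  calc (x : ℝ) * (log (x + 1) - log x) ≤ x * ((x + 1) / x - 1) := by gcongr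
    _ = 1 := by field_simp; ring

lemma abs_natCast_mul_harm_sub_log_le {x n : ℕ} (hxn : x ≤ n) :
    |x * (harm x - harm n + log n) - x * log x| ≤ 1 := by
  rcases Nat.eq_zero_or_pos x with rfl | hx
  · simp
  have hupper := strictAnti_eulerMascheroniSeq'.antitone hxn
  have hlower := strictMono_eulerMascheroniSeq.monotone hxn
  simp only [eulerMascheroniSeq', eulerMascheroniSeq, hx.ne', (hx.trans_le hxn).ne',
    if_false] at hupper hlower
  have hlog : log n ≤ log (n + 1) :=
    Real.log_le_log (by exact_mod_cast hx.trans_le hxn) (by linarith)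
  rw [harm_eq_harmonic, harm_eq_harmonic, ← mul_sub,
    abs_of_nonneg (mul_nonneg (Nat.cast_nonneg x) (by linarith))]
  calc (x : ℝ) * (harmonic x - harmonic n + log n - log x) ≤ x * (log (x + 1) - log x) := by
        gcongr; linarith
    _ ≤ 1 := natCast_mul_log_add_one_sub_log_le_one x

lemma abs_sum_choose_mul_choose_mul_log_div_sub_le (m t : ℕ) :
    |(∑ x ∈ range (m + 2 * t + 1), (x.choose t * (m + 2 * t - x).choose t : ℝ) * (x * log x))
        / (m + 2 * t + 1).choose (2 * t + 1)
      - ((m + 2 * t) / 2 * log (m + 2 * t + 1 : ℕ)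
        - m / 2 * (harm (2 * t + 2) - harm (t + 1)) - t * (harm (2 * t + 1) - harm t))| ≤ 1 := by
  set W : ℝ := (((m + 2 * t + 1).choose (2 * t + 1) : ℕ) : ℝ)
  have hW : 0 < W := Nat.cast_pos.2 (Nat.choose_pos (by omega))
  rw [div_sub' hW.ne', abs_div, abs_of_pos hW, div_le_one hW,
    ← sum_range_choose_mul_choose_mul_harm_sub_harm_add, ← sum_sub_distrib]
  calc _ ≤ ∑ x ∈ range (m + 2 * t + 1), (x.choose t * (m + 2 * t - x).choose t : ℝ) := by
        refine (abs_sum_le_sum_abs _ _).trans (sum_le_sum fun x hx ↦ ?_)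
        rw [← mul_sub, abs_mul, abs_of_nonneg (by positivity), abs_sub_comm]
        exact mul_le_of_le_one_right (by positivity)
          (abs_natCast_mul_harm_sub_log_le (mem_range.1 hx).le)
    _ = W := by rw [sum_range_choose_mul_choose, show t + t + 1 = 2 * t + 1 by ring]

lemma abs_sum_betaBinPMF_mul_log_sub_le (t n : ℕ) (hn : 2 * t + 1 ≤ n) :
    |∑ i ∈ range (n - (2 * t + 1) + 1), betaBinPMF (n - (2 * t + 1)) (t + 1) (t + 1) i
          * ((t + i : ℕ) * log (t + i : ℕ))
        - (n / 2 * log n - n / 2 * (harm (2 * t + 2) - harm (t + 1)))|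
      ≤ log n / 2 + (1 + |(2 * t + 1) / 2 * (harm (2 * t + 2) - harm (t + 1))
          - t * (harm (2 * t + 1) - harm t)|) := by
  obtain ⟨m, rfl⟩ := Nat.exists_eq_add_of_le' hn
  have hsum := sum_betaBinPMF_mul m t t (fun x ↦ x * log x)
  rw [show m + t + t = m + 2 * t by ring, show t + t + 1 = 2 * t + 1 by ring] at hsum
  rw [Nat.add_sub_cancel, hsum, show m + (2 * t + 1) = m + 2 * t + 1 by ring]
  set n := m + 2 * t + 1
  set E := (m + 2 * t) / 2 * log n
    - m / 2 * (harm (2 * t + 2) - harm (t + 1)) - t * (harm (2 * t + 1) - harm t)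
  set δ := (2 * t + 1) / 2 * (harm (2 * t + 2) - harm (t + 1)) - t * (harm (2 * t + 1) - harm t)
  have hgap : E - (n / 2 * log n - n / 2 * (harm (2 * t + 2) - harm (t + 1))) = δ - log n / 2 := by
    simp only [E, δ, n]
    push_cast
    ring
  have hlog : 0 ≤ log n / 2 := div_nonneg (Real.log_natCast_nonneg n) zero_le_two
  calc _ ≤ |(∑ x ∈ range n, (x.choose t * (m + 2 * t - x).choose t : ℝ) * (x * log x))
            / (n.choose (2 * t + 1) : ℕ) - E|
        + |E - (n / 2 * log n - n / 2 * (harm (2 * t + 2) - harm (t + 1)))| := abs_sub_le _ _ _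
    _ ≤ 1 + (|δ| + log n / 2) := by
        rw [hgap]
        gcongr
        · exact abs_sum_choose_mul_choose_mul_log_div_sub_le m t
        · exact (abs_sub _ _).trans_eq (by rw [abs_of_nonneg hlog])
    _ = _ := by ring

lemma log_div_two_add_le_mul_rpow {ε K x : ℝ} (hε : 0 < ε) (hK : 0 ≤ K) (hx : 1 ≤ x) :
    log x / 2 + K ≤ (1 / (2 * ε) + K) * x ^ ε := by
  have hpow : 1 ≤ x ^ ε := Real.one_le_rpow hx hε.le
  calc log x / 2 + K ≤ x ^ ε / ε / 2 + K * x ^ ε := by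
        gcongr
        · exact Real.log_le_rpow_div (by linarith) hε
        · exact le_mul_of_one_le_right hK hpow
    _ = (1 / (2 * ε) + K) * x ^ ε := by field_simp

theorem E_J_lg_J_general (t : ℕ) (h : ℝ) (h1 : h < 1) :
    ∃ C : ℝ, ∃ N : ℕ, ∀ n ≥ N,
      |(∑ i ∈ Finset.range (n - (2 * t + 1) + 1),
          betaBinPMF (n - (2 * t + 1)) ((t : ℝ) + 1) ((t : ℝ) + 1) i *
            (((t + i : ℕ) : ℝ) * Real.logb 2 ((t + i : ℕ) : ℝ)))
        - ((1/2) * n * Real.logb 2 n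
            - ((harm (2 * t + 2) - harm (t + 1)) / (2 * Real.log 2)) * n)|
      ≤ C * (n : ℝ) ^ (1 - h) := by
  set K := 1 + |(2 * t + 1) / 2 * (harm (2 * t + 2) - harm (t + 1))
    - t * (harm (2 * t + 1) - harm t)|
  have hlog2 : 0 < log 2 := Real.log_pos one_lt_two
  refine ⟨(1 / (2 * (1 - h)) + K) / log 2, 2 * t + 1, fun n hn ↦ ?_⟩
  have hlogb (x : ℝ) : x * logb 2 x = x * log x / log 2 := by rw [logb, mul_div_assoc]
  simp only [hlogb, ← sum_div, mul_div_assoc']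
  rw [show (1 / 2 : ℝ) * n * logb 2 n - (harm (2 * t + 2) - harm (t + 1)) / (2 * log 2) * n
      = (n / 2 * log n - n / 2 * (harm (2 * t + 2) - harm (t + 1))) / log 2 by
        rw [logb]; field_simp,
    ← sub_div, abs_div, abs_of_pos hlog2, div_mul_eq_mul_div (1 / (2 * (1 - h)) + K),
    div_le_div_iff_of_pos_right hlog2]
  calc _ ≤ log n / 2 + K := abs_sum_betaBinPMF_mul_log_sub_le t n hn
    _ ≤ _ := log_div_two_add_le_mul_rpow (by linarith) (by positivity)
        (by exact_mod_cast (show 1 ≤ n by omega))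

/-- For `J = t + I`, `I ~ BetaBin(n−k, t+1, t+1)` with `k = 2t+1`, and any fixed `h ∈ (0,1)`,
`E[J·lg J] = (1/2)·n·lg n − ((H_{k+1} − H_{t+1})/(2·ln 2))·n ± O(n^{1−h})`
(with the convention `0·lg 0 = 0`, which holds since `Real.logb 2 0 = 0`). -/
theorem E_J_lg_J (t : ℕ) (h : ℝ) (h0 : 0 < h) (h1 : h < 1) :
    ∃ C : ℝ, ∃ N : ℕ, ∀ n ≥ N,
      |(∑ i ∈ Finset.range (n - (2 * t + 1) + 1),
          betaBinPMF (n - (2 * t + 1)) ((t : ℝ) + 1) ((t : ℝ) + 1) i *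
            (((t + i : ℕ) : ℝ) * Real.logb 2 ((t + i : ℕ) : ℝ)))
        - ((1/2) * n * Real.logb 2 n
            - ((harm (2 * t + 2) - harm (t + 1)) / (2 * Real.log 2)) * n)|
      ≤ C * (n : ℝ) ^ (1 - h) :=
  E_J_lg_J_general t h h1
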